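/- Let F_{S1} := x0^9 + (x1^3 − x2^3)·(x2^3 − x3^3)·(x3^3 − x1^3) and F_{S2} := F_{S1}·(x0^9 − x1^3·x2^3·x3^3) + x1^6·x2^6·x3^6 in ℂ[x0, x1, x2, x3]. There exists a ∈ ℂ with a^9 = −56 such that F_{S2} vanishes at the point (a, 1, 2, 0) ∈ ℂ⁴ and at least one of the four partial derivatives of F_{S2} does not vanish at (a, 1, 2, 0); that is, (a, 1, 2, 0) represents a smooth point of the projective surface S2 = {F_{S2} = 0} ⊂ ℙ³_ℂ. -/
import Mathlib


open MvPolynomial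

/-- The homogeneous degree-9 polynomial defining the surface `S1 ⊂ ℙ³_ℂ`. -/
noncomputable def FS1 : MvPolynomial (Fin 4) ℂ :=
  X 0 ^ 9 + (X 1 ^ 3 - X 2 ^ 3) * (X 2 ^ 3 - X 3 ^ 3) * (X 3 ^ 3 - X 1 ^ 3)

/-- The homogeneous degree-18 polynomial defining the surface `S2 ⊂ ℙ³_ℂ`. -/
noncomputable def FS2 : MvPolynomial (Fin 4) ℂ :=
  FS1 * (X 0 ^ 9 - X 1 ^ 3 * X 2 ^ 3 * X 3 ^ 3) + X 1 ^ 6 * X 2 ^ 6 * X 3 ^ 6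

/-- There is `a ∈ ℂ` with `a⁹ = −56` such that `(a, 1, 2, 0)` represents a smooth point of
the projective surface `S2 = {F_{S2} = 0}`: `F_{S2}` vanishes there but some partial
derivative of `F_{S2}` does not. -/
theorem stmt_4 :
    ∃ a : ℂ, a ^ 9 = -56 ∧ eval ![a, 1, 2, 0] FS2 = 0 ∧
      ∃ i : Fin 4, eval ![a, 1, 2, 0] (pderiv i FS2) ≠ 0 := by
  obtain ⟨a, ha⟩ := Complex.isAlgClosed.exists_pow_nat_eq (-56) (by norm_num : 0 < 9)
  have ha0 : a ≠ 0 := by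
    intro h; rw [h] at ha; norm_num at ha
  refine ⟨a, ha, ?_, 0, ?_⟩
  · simp only [FS2, FS1, map_add, map_sub, map_mul, map_pow, eval_X]
    simp only [Matrix.cons_val_zero, Matrix.cons_val_one, Matrix.head_cons,
      Matrix.cons_val_two, Matrix.tail_cons, Matrix.cons_val_three]
    rw [ha]; ring
  · simp only [FS2, FS1, map_add, map_sub, map_mul, Derivation.leibniz,
      Derivation.leibniz_pow, pderiv_X, smul_eq_mul]
    simp only [Pi.single_eq_same, Pi.single_eq_of_ne (by decide : (1:Fin 4) ≠ 0),
      Pi.single_eq_of_ne (by decide : (2:Fin 4) ≠ 0),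
      Pi.single_eq_of_ne (by decide : (3:Fin 4) ≠ 0)]
    simp only [map_add, map_sub, map_mul, map_pow, map_nsmul, map_ofNat, eval_X,
      eval_zero, map_zero, map_one]
    simp only [Matrix.cons_val_zero, Matrix.cons_val_one, Matrix.head_cons,
      Matrix.cons_val_two, Matrix.tail_cons, Matrix.cons_val_three]
    intro h
    norm_num [nsmul_eq_mul, ha] at h
    exact ha0 h
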